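/- Let R be a commutative Noetherian local ring with maximal ideal 𝔪 which is 𝔪-adically complete and has finite residue field. Let E be the R-module of additive group homomorphisms f : R → ℚ/ℤ such that f vanishes on 𝔪^k for some k, with R-action (r·f)(x) = f(rx). Let M be a finitely generated R-module. Then the map φ ↦ (x ↦ φ(x)(1)) is an isomorphism from Hom_R(M, E) onto the group of additive homomorphisms f : M → ℚ/ℤ such that f vanishes on 𝔪^k·M for some k. -/

import Mathlib

open IsLocalRing

/-- The additive group `ℚ/ℤ`: the quotient of the additive group of the rationals by the
subgroup of integers (the integer multiples of `1`). -/
abbrev QmodZ : Type := ℚ ⧸ AddSubgroup.zmultiples (1 : ℚ)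

/-- The subgroup of `Hom_ℤ(R, ℚ/ℤ)` consisting of the additive homomorphisms `f : R → ℚ/ℤ`
vanishing on `𝔪^k` for some `k`, where `𝔪` is the maximal ideal of the local ring `R`. -/
def matlisSub (R : Type) [CommRing R] [IsLocalRing R] : AddSubgroup (R →+ QmodZ) where
  carrier := {f | ∃ k : ℕ, ∀ x ∈ maximalIdeal R ^ k, f x = 0}
  zero_mem' := ⟨0, fun x _ => rfl⟩
  add_mem' := by
    rintro f g ⟨k, hk⟩ ⟨l, hl⟩
    refine ⟨k + l, fun x hx => ?_⟩
    rw [AddMonoidHom.add_apply, hk x (Ideal.pow_le_pow_right (Nat.le_add_right k l) hx),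
      hl x (Ideal.pow_le_pow_right (Nat.le_add_left l k) hx), add_zero]
  neg_mem' := by
    rintro f ⟨k, hk⟩
    exact ⟨k, fun x hx => by rw [AddMonoidHom.neg_apply, hk x hx, neg_zero]⟩

/-- The type `E` of additive homomorphisms `f : R → ℚ/ℤ` vanishing on a power of the maximal
ideal. -/
abbrev MatlisE (R : Type) [CommRing R] [IsLocalRing R] : Type := ↥(matlisSub R)

/-- The `R`-module structure on `E` given by `(r · f)(x) = f (r x)`. -/
instance matlisModule (R : Type) [CommRing R] [IsLocalRing R] : Module R (MatlisE R) where
  smul r f := ⟨(f : R →+ QmodZ).comp (AddMonoidHom.mulLeft r), by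
    obtain ⟨k, hk⟩ := f.2
    exact ⟨k, fun x hx => hk _ (Ideal.mul_mem_left _ r hx)⟩⟩
  one_smul f := Subtype.ext (AddMonoidHom.ext fun x => by
    show (f : R →+ QmodZ) (1 * x) = (f : R →+ QmodZ) x
    rw [one_mul])
  mul_smul r s f := Subtype.ext (AddMonoidHom.ext fun x => by
    show (f : R →+ QmodZ) ((r * s) * x) = (f : R →+ QmodZ) (s * (r * x))
    rw [← mul_assoc, mul_comm r s])
  smul_zero r := Subtype.ext (AddMonoidHom.ext fun x => rfl)
  smul_add r f g := Subtype.ext (AddMonoidHom.ext fun x => rfl)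
  add_smul r s f := Subtype.ext (AddMonoidHom.ext fun x => by
    show (f : R →+ QmodZ) ((r + s) * x) =
      (f : R →+ QmodZ) (r * x) + (f : R →+ QmodZ) (s * x)
    rw [add_mul, map_add])
  zero_smul f := Subtype.ext (AddMonoidHom.ext fun x => by
    show (f : R →+ QmodZ) (0 * x) = 0
    rw [zero_mul, map_zero])


/-- Evaluation at `1 ∈ R`: the additive homomorphism `M → ℚ/ℤ`, `x ↦ φ(x)(1)`, associated to an
`R`-linear map `φ : M → E`. -/
def evalOne (R : Type) [CommRing R] [IsLocalRing R]
    (M : Type) [AddCommGroup M] [Module R M] (φ : M →ₗ[R] MatlisE R) : M →+ QmodZ where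
  toFun x := (φ x : R →+ QmodZ) 1
  map_zero' := by simp only [map_zero]; rfl
  map_add' x y := by simp only [map_add]; rfl

/-!
An `R`-linear `φ : M → E` is recovered from `f = evalOne φ` through
`φ(x)(r) = φ(r • x)(1) = f(r • x)`, and conversely every `f` vanishing on `𝔪^k • M` defines
such a `φ` by the same formula. The only point needing care is that for arbitrary `φ` the
function `evalOne φ` vanishes on a *single* `𝔪^k • M`: the submodules `E_k ⊆ E` of functions
vanishing on `𝔪^k` form an increasing chain exhausting `E`, so the finitely generated
submodule `range φ` lies in one of them.
-/

namespace MatlisE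

variable {R : Type} [CommRing R] [IsLocalRing R]

theorem smul_apply (r : R) (f : MatlisE R) (x : R) :
    ((r • f : MatlisE R) : R →+ QmodZ) x = (f : R →+ QmodZ) (r * x) := rfl

variable (R) in
def vanishingSubmodule (k : ℕ) : Submodule R (MatlisE R) where
  carrier := {f | ∀ x ∈ maximalIdeal R ^ k, (f : R →+ QmodZ) x = 0}
  zero_mem' _ _ := rfl
  add_mem' {f g} hf hg x hx := by
    change (f : R →+ QmodZ) x + (g : R →+ QmodZ) x = 0
    rw [hf x hx, hg x hx, add_zero]
  smul_mem' r _ hf x hx := hf _ (Ideal.mul_mem_left _ r hx)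

theorem monotone_vanishingSubmodule : Monotone (vanishingSubmodule R) :=
  fun _ _ hkl _ hf x hx => hf x (Ideal.pow_le_pow_right hkl hx)

theorem iSup_vanishingSubmodule : ⨆ k, vanishingSubmodule R k = ⊤ := by
  refine eq_top_iff.2 fun f _ => ?_
  obtain ⟨k, hk⟩ := f.2
  exact Submodule.mem_iSup_of_mem k hk

end MatlisE

open MatlisE

section

variable {R : Type} [CommRing R] [IsLocalRing R] {M : Type} [AddCommGroup M] [Module R M]

theorem LinearMap.exists_range_le_vanishingSubmodule [Module.Finite R M]
    (φ : M →ₗ[R] MatlisE R) : ∃ k, LinearMap.range φ ≤ vanishingSubmodule R k := by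
  have hcompact : IsCompactElement (LinearMap.range φ) :=
    (Submodule.fg_iff_compact _).1 (LinearMap.range_eq_map φ ▸ Module.Finite.fg_top.map φ)
  obtain ⟨-, ⟨k, rfl⟩, hk⟩ :=
    (CompleteLattice.isCompactElement_iff_le_of_directed_sSup_le _ _).1 hcompact _
      (Set.range_nonempty _) monotone_vanishingSubmodule.directed_le.directedOn_range
      (by rw [sSup_range, iSup_vanishingSubmodule]; exact le_top)
  exact ⟨k, hk⟩

theorem coe_apply_eq_evalOne_smul (φ : M →ₗ[R] MatlisE R) (x : M) (r : R) :
    (φ x : R →+ QmodZ) r = evalOne R M φ (r • x) := by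
  change _ = (φ (r • x) : R →+ QmodZ) 1
  rw [map_smul, MatlisE.smul_apply, mul_one]

theorem evalOne_injective : Function.Injective (evalOne R M) := fun φ ψ h =>
  LinearMap.ext fun x => Subtype.ext <| AddMonoidHom.ext fun r => by
    rw [coe_apply_eq_evalOne_smul, coe_apply_eq_evalOne_smul, h]

theorem evalOne_add (φ ψ : M →ₗ[R] MatlisE R) :
    evalOne R M (φ + ψ) = evalOne R M φ + evalOne R M ψ := rfl

theorem evalOne_eq_zero_of_range_le {φ : M →ₗ[R] MatlisE R} {k : ℕ}
    (h : LinearMap.range φ ≤ vanishingSubmodule R k) :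
    ∀ x ∈ (maximalIdeal R ^ k • ⊤ : Submodule R M), evalOne R M φ x = 0 := by
  intro x hx
  refine Submodule.smul_induction_on hx (fun r hr m _ => ?_) fun x y hx hy => ?_
  · rw [← coe_apply_eq_evalOne_smul]
    exact h ⟨m, rfl⟩ r hr
  · rw [map_add, hx, hy, add_zero]

def ofVanishing (f : M →+ QmodZ) (k : ℕ)
    (hf : ∀ x ∈ (maximalIdeal R ^ k • ⊤ : Submodule R M), f x = 0) : M →ₗ[R] MatlisE R where
  toFun x := ⟨f.comp (smulAddHom R M |>.flip x),
    ⟨k, fun r hr => hf _ (Submodule.smul_mem_smul hr trivial)⟩⟩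
  map_add' x y := Subtype.ext <| AddMonoidHom.ext fun r => by
    change f (r • (x + y)) = f (r • x) + f (r • y)
    rw [smul_add, map_add]
  map_smul' c x := Subtype.ext <| AddMonoidHom.ext fun r => by
    change f (r • c • x) = f ((c * r) • x)
    rw [mul_comm, mul_smul]

theorem evalOne_ofVanishing (f : M →+ QmodZ) (k : ℕ)
    (hf : ∀ x ∈ (maximalIdeal R ^ k • ⊤ : Submodule R M), f x = 0) :
    evalOne R M (ofVanishing f k hf) = f :=
  AddMonoidHom.ext fun x => congrArg f (one_smul R x)

theorem range_evalOne [Module.Finite R M] :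
    Set.range (evalOne R M) =
      {f : M →+ QmodZ | ∃ k : ℕ,
        ∀ x ∈ (maximalIdeal R ^ k • (⊤ : Submodule R M) : Submodule R M), f x = 0} := by
  ext f
  constructor
  · rintro ⟨φ, rfl⟩
    obtain ⟨k, hk⟩ := φ.exists_range_le_vanishingSubmodule
    exact ⟨k, evalOne_eq_zero_of_range_le hk⟩
  · rintro ⟨k, hk⟩
    exact ⟨ofVanishing f k hk, evalOne_ofVanishing f k hk⟩

end

theorem stmt14_general (R : Type) [CommRing R] [IsLocalRing R]
    (M : Type) [AddCommGroup M] [Module R M] [Module.Finite R M] :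
    Function.Injective (evalOne R M) ∧
      (∀ φ ψ : M →ₗ[R] MatlisE R, evalOne R M (φ + ψ) = evalOne R M φ + evalOne R M ψ) ∧
      Set.range (evalOne R M) =
        {f : M →+ QmodZ | ∃ k : ℕ,
          ∀ x ∈ (maximalIdeal R ^ k • (⊤ : Submodule R M) : Submodule R M), f x = 0} :=
  ⟨evalOne_injective, evalOne_add, range_evalOne⟩

/-- Let `R` be a commutative Noetherian local ring with maximal ideal `𝔪`,
`𝔪`-adically complete and with finite residue field, and let `E` be the `R`-module of additive
homomorphisms `f : R → ℚ/ℤ` vanishing on some power of `𝔪` (with action `(r·f)(x) = f(rx)`).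
Let `M` be a finitely generated `R`-module.  Then `φ ↦ (x ↦ φ(x)(1))` is an isomorphism (an
injective additive map) from `Hom_R(M, E)` onto the group of additive homomorphisms
`f : M → ℚ/ℤ` vanishing on `𝔪^k·M` for some `k`. -/
theorem stmt14 (R : Type) [CommRing R] [IsLocalRing R] [IsNoetherianRing R]
    [IsAdicComplete (maximalIdeal R) R] [Finite (ResidueField R)]
    (M : Type) [AddCommGroup M] [Module R M] [Module.Finite R M] :
    Function.Injective (evalOne R M) ∧
      (∀ φ ψ : M →ₗ[R] MatlisE R, evalOne R M (φ + ψ) = evalOne R M φ + evalOne R M ψ) ∧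
      Set.range (evalOne R M) =
        {f : M →+ QmodZ | ∃ k : ℕ,
          ∀ x ∈ (maximalIdeal R ^ k • (⊤ : Submodule R M) : Submodule R M), f x = 0} :=
  stmt14_general R M
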